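/- arXiv:0811.0688 — 4 statements merged into one kernel-verified Lean document; each statement's English description precedes it below -/
import Mathlib

section
/- Consider the Sturm–Liouville-type operator L u = (f u')' on the interval [X₋, X₊] with interior point X₀ ∈ (X₋, X₊), where f is C¹ and the functions u satisfy: continuity u(X₀⁻)=u(X₀⁺), the value conditions u(X₋)=u(X₀) and u(X₊)=u(X₀), and the flux condition f(X₊)u'(X₊) − f(X₀⁺)u'(X₀⁺) + f(X₀⁻)u'(X₀⁻) − f(X₋)u'(X₋) = 0. If u and v satisfy these boundary conditions and Lu = λu, Lv = μv with λ ≠ μ, then ∫_{X₋}^{X₊} u v dx = 0. -/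
/-!
Green's identity on each half gives `(λ - μ) ∫ u v = [f (u' v - v' u)]` at the endpoints.
The value conditions make `u` take one value `c` and `v` one value `d` at all four endpoints,
so the sum of the boundary terms over both halves is `d · (flux of u) - c · (flux of v) = 0`.
-/

open Set

noncomputable def fluxWronskian (f u v : ℝ → ℝ) (x : ℝ) : ℝ :=
  f x * deriv u x * v x - f x * deriv v x * u x

section Green

variable {f u v : ℝ → ℝ} {lam mu : ℝ}

theorem hasDerivAt_fluxWronskian {x : ℝ}
    (hfu : HasDerivAt (fun y => f y * deriv u y) (lam * u x) x)
    (hfv : HasDerivAt (fun y => f y * deriv v y) (mu * v x) x)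
    (hu : DifferentiableAt ℝ u x) (hv : DifferentiableAt ℝ v x) :
    HasDerivAt (fluxWronskian f u v) ((lam - mu) * (u x * v x)) x :=
  ((hfu.mul hv.hasDerivAt).sub (hfv.mul hu.hasDerivAt)).congr_deriv (by ring)

theorem sub_mul_integral_mul_eq_fluxWronskian_sub {a b : ℝ}
    (hf : Differentiable ℝ f) (hu : ContDiff ℝ 2 u) (hv : ContDiff ℝ 2 v)
    (heu : ∀ x ∈ uIcc a b, deriv (fun y => f y * deriv u y) x = lam * u x)
    (hev : ∀ x ∈ uIcc a b, deriv (fun y => f y * deriv v y) x = mu * v x) :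
    (lam - mu) * ∫ x in a..b, u x * v x = fluxWronskian f u v b - fluxWronskian f u v a := by
  have hflux : ∀ {w : ℝ → ℝ}, ContDiff ℝ 2 w → Differentiable ℝ (fun y => f y * deriv w y) :=
    fun hw => hf.mul hw.differentiable_deriv_two
  have hder : ∀ x ∈ uIcc a b,
      HasDerivAt (fluxWronskian f u v) ((lam - mu) * (u x * v x)) x := fun x hx =>
    hasDerivAt_fluxWronskian (heu x hx ▸ (hflux hu x).hasDerivAt)
      (hev x hx ▸ (hflux hv x).hasDerivAt)
      (hu.differentiable two_ne_zero x) (hv.differentiable two_ne_zero x)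
  rw [← intervalIntegral.integral_const_mul]
  exact intervalIntegral.integral_eq_sub_of_hasDerivAt hder
    ((continuous_const.mul (hu.continuous.mul hv.continuous)).intervalIntegrable a b)

end Green

/-- Orthogonality of eigenmodes of the operator `L u = (f u')'` on `[X₋,X₊]`
with the insulating coupling conditions at the interior grid point `X₀`.
Eigenmodes are represented by their left and right pieces. -/
theorem stmt1 (Xm X0 Xp : ℝ) (h1 : Xm < X0) (h2 : X0 < Xp)
    (f : ℝ → ℝ) (hf : ContDiff ℝ 1 f)
    (u₁ u₂ v₁ v₂ : ℝ → ℝ) (lam mu : ℝ) (hlm : lam ≠ mu)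
    (hu₁ : ContDiff ℝ 2 u₁) (hu₂ : ContDiff ℝ 2 u₂)
    (hv₁ : ContDiff ℝ 2 v₁) (hv₂ : ContDiff ℝ 2 v₂)
    -- eigen-equations `L u = λ u`, `L v = μ v` on the two halves
    (heu₁ : ∀ x ∈ Set.Icc Xm X0, deriv (fun y => f y * deriv u₁ y) x = lam * u₁ x)
    (heu₂ : ∀ x ∈ Set.Icc X0 Xp, deriv (fun y => f y * deriv u₂ y) x = lam * u₂ x)
    (hev₁ : ∀ x ∈ Set.Icc Xm X0, deriv (fun y => f y * deriv v₁ y) x = mu * v₁ x)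
    (hev₂ : ∀ x ∈ Set.Icc X0 Xp, deriv (fun y => f y * deriv v₂ y) x = mu * v₂ x)
    -- continuity and value conditions for u
    (hcu : u₁ X0 = u₂ X0) (hu_m : u₁ Xm = u₁ X0) (hu_p : u₂ Xp = u₁ X0)
    -- continuity and value conditions for v
    (hcv : v₁ X0 = v₂ X0) (hv_m : v₁ Xm = v₁ X0) (hv_p : v₂ Xp = v₁ X0)
    -- flux conditions
    (hfu : f Xp * deriv u₂ Xp - f X0 * deriv u₂ X0
            + f X0 * deriv u₁ X0 - f Xm * deriv u₁ Xm = 0)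
    (hfv : f Xp * deriv v₂ Xp - f X0 * deriv v₂ X0
            + f X0 * deriv v₁ X0 - f Xm * deriv v₁ Xm = 0) :
    (∫ x in Xm..X0, u₁ x * v₁ x) + (∫ x in X0..Xp, u₂ x * v₂ x) = 0 := by
  have hf' := hf.differentiable one_ne_zero
  have green₁ := sub_mul_integral_mul_eq_fluxWronskian_sub hf' hu₁ hv₁
    (uIcc_of_le h1.le ▸ heu₁) (uIcc_of_le h1.le ▸ hev₁)
  have green₂ := sub_mul_integral_mul_eq_fluxWronskian_sub hf' hu₂ hv₂
    (uIcc_of_le h2.le ▸ heu₂) (uIcc_of_le h2.le ▸ hev₂)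
  have hsum : (lam - mu) *
      ((∫ x in Xm..X0, u₁ x * v₁ x) + (∫ x in X0..Xp, u₂ x * v₂ x)) = 0 := by
    rw [mul_add, green₁, green₂]
    simp only [fluxWronskian]
    rw [← hcu, ← hcv, hu_m, hu_p, hv_m, hv_p]
    linear_combination v₁ X0 * hfu - u₁ X0 * hfv
  exact (mul_eq_zero.mp hsum).resolve_left (sub_ne_zero.mpr hlm)
end

section
/- On the symmetric element [−h, h] with interior point 0, consider the constant-coefficient eigenproblem f u'' = λ u (f > 0 constant) with boundary conditions: continuity at 0, u(±h) = u(0), and u'(h) − u'(0⁺) + u'(0⁻) − u'(−h) = 0. Then for each even integer n ≥ 2, setting k = nπ/h, the three functions cos(k x), sin(k x), and sin(k|x|) all satisfy the eigenproblem with eigenvalue λ = −f k², and they are pairwise orthogonal in L²(−h,h). -/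
/-!
Since `k h = n π` with `n` even, `sin (k h) = 0` and `cos (k h) = 1`. The smooth modes `cos (k x)`
and `sin (k x)` have no jump in derivative at `0`, so their coupling condition reduces to
`u'(h) = u'(-h)`; `sin (k |x|)` agrees with `sin (k x)` on `[0, h]` and with `sin (-k x)` on
`[-h, 0]`, and its derivative jump `2k` at the kink is balanced by `u'(h) - u'(-h) = 2k cos (k h)`.
For orthogonality, `cos (k x) sin (k x)` and `sin (k x) sin (k |x|)` are odd, while the even
product `cos (k x) sin (k |x|)` integrates to twice
`∫₀ʰ cos (k x) sin (k x) = sin² (k h) / (2k) = 0`.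
-/

open Real Set Filter Topology MeasureTheory

lemma hasDerivAt_sin_mul (k x : ℝ) : HasDerivAt (fun y => sin (k * y)) (k * cos (k * x)) x := by
  simpa [mul_comm] using ((hasDerivAt_id x).const_mul k).sin

lemma hasDerivAt_cos_mul (k x : ℝ) :
    HasDerivAt (fun y => cos (k * y)) (-(k * sin (k * x))) x := by
  simpa [mul_comm] using ((hasDerivAt_id x).const_mul k).cos

lemma deriv_sin_mul (k : ℝ) : deriv (fun y => sin (k * y)) = fun x => k * cos (k * x) :=
  funext fun x => (hasDerivAt_sin_mul k x).deriv

lemma deriv_cos_mul (k : ℝ) : deriv (fun y => cos (k * y)) = fun x => -(k * sin (k * x)) :=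
  funext fun x => (hasDerivAt_cos_mul k x).deriv

lemma deriv_deriv_sin_mul (k x : ℝ) :
    deriv (deriv fun y => sin (k * y)) x = -k ^ 2 * sin (k * x) := by
  rw [deriv_sin_mul, ((hasDerivAt_cos_mul k x).const_mul k).deriv]
  ring

lemma deriv_deriv_cos_mul (k x : ℝ) :
    deriv (deriv fun y => cos (k * y)) x = -k ^ 2 * cos (k * x) := by
  have h : HasDerivAt (fun y => -(k * sin (k * y))) (-(k * (k * cos (k * x)))) x :=
    ((hasDerivAt_sin_mul k x).const_mul k).neg
  rw [deriv_cos_mul, h.deriv]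
  ring

lemma sin_mul_abs_eventuallyEq_of_pos (k : ℝ) {x : ℝ} (hx : 0 < x) :
    (fun y => sin (k * |y|)) =ᶠ[𝓝 x] fun y => sin (k * y) := by
  filter_upwards [Ioi_mem_nhds hx] with y hy
  rw [abs_of_pos hy]

lemma sin_mul_abs_eventuallyEq_of_neg (k : ℝ) {x : ℝ} (hx : x < 0) :
    (fun y => sin (k * |y|)) =ᶠ[𝓝 x] fun y => sin (-k * y) := by
  filter_upwards [Iio_mem_nhds hx] with y hy
  rw [abs_of_neg hy, neg_mul_comm]

lemma deriv_deriv_sin_mul_abs (k : ℝ) {x : ℝ} (hx : x ≠ 0) :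
    deriv (deriv fun y => sin (k * |y|)) x = -k ^ 2 * sin (k * |x|) := by
  rcases hx.lt_or_gt with hx | hx
  · rw [(sin_mul_abs_eventuallyEq_of_neg k hx).deriv.deriv_eq, deriv_deriv_sin_mul, abs_of_neg hx,
      neg_sq, neg_mul k x, mul_neg k x]
  · rw [(sin_mul_abs_eventuallyEq_of_pos k hx).deriv.deriv_eq, deriv_deriv_sin_mul, abs_of_pos hx]

noncomputable def couplingFlux (u : ℝ → ℝ) (h : ℝ) : ℝ :=
  deriv u h - derivWithin u (Ici 0) 0 + derivWithin u (Iic 0) 0 - deriv u (-h)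

lemma couplingFlux_of_differentiableAt {u : ℝ → ℝ} (hu : DifferentiableAt ℝ u 0) (h : ℝ) :
    couplingFlux u h = deriv u h - deriv u (-h) := by
  rw [couplingFlux, hu.derivWithin (uniqueDiffWithinAt_Ici 0),
    hu.derivWithin (uniqueDiffWithinAt_Iic 0)]
  ring

lemma couplingFlux_cos_mul (k h : ℝ) :
    couplingFlux (fun y => cos (k * y)) h = -2 * k * sin (k * h) := by
  rw [couplingFlux_of_differentiableAt (hasDerivAt_cos_mul k 0).differentiableAt, deriv_cos_mul]
  simp only [mul_neg, sin_neg]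
  ring

lemma couplingFlux_sin_mul (k h : ℝ) : couplingFlux (fun y => sin (k * y)) h = 0 := by
  rw [couplingFlux_of_differentiableAt (hasDerivAt_sin_mul k 0).differentiableAt, deriv_sin_mul]
  simp only [mul_neg, cos_neg, sub_self]

lemma couplingFlux_sin_mul_abs (k : ℝ) {h : ℝ} (hh : 0 < h) :
    couplingFlux (fun y => sin (k * |y|)) h = 2 * k * (cos (k * h) - 1) := by
  have right : derivWithin (fun y => sin (k * |y|)) (Ici 0) 0 = k := by
    rw [derivWithin_congr (f := fun y => sin (k * y))
      (fun y hy => by rw [abs_of_nonneg (mem_Ici.mp hy)]) (by simp),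
      (hasDerivAt_sin_mul k 0).hasDerivWithinAt.derivWithin (uniqueDiffWithinAt_Ici 0)]
    simp
  have left : derivWithin (fun y => sin (k * |y|)) (Iic 0) 0 = -k := by
    rw [derivWithin_congr (f := fun y => sin (-k * y))
      (fun y hy => by simp [abs_of_nonpos (mem_Iic.mp hy)]) (by simp),
      (hasDerivAt_sin_mul (-k) 0).hasDerivWithinAt.derivWithin (uniqueDiffWithinAt_Iic 0)]
    simp
  rw [couplingFlux, right, left, (sin_mul_abs_eventuallyEq_of_pos k hh).deriv_eq,
    (sin_mul_abs_eventuallyEq_of_neg k (neg_neg_of_pos hh)).deriv_eq, deriv_sin_mul,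
    deriv_sin_mul]
  simp only [mul_neg, neg_mul, neg_neg]
  ring

section Parity

variable {E : Type*} [NormedAddCommGroup E] [NormedSpace ℝ E] {g : ℝ → E}

lemma intervalIntegral.integral_symm_eq_zero_of_odd (hg : ∀ x, g (-x) = -g x) (a : ℝ) :
    ∫ x in -a..a, g x = 0 := by
  have h := intervalIntegral.integral_comp_neg (a := -a) (b := a) g
  simp only [hg, intervalIntegral.integral_neg, neg_neg] at h
  have h2 : (2 : ℝ) • ∫ x in -a..a, g x = 0 := by
    rw [two_smul]
    nth_rewrite 1 [← h]
    exact neg_add_cancel _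
  exact (smul_eq_zero.mp h2).resolve_left two_ne_zero

lemma intervalIntegral.integral_symm_of_even (hg : ∀ x, g (-x) = g x) (hc : Continuous g)
    (a : ℝ) :
    ∫ x in -a..a, g x = (2 : ℝ) • ∫ x in 0..a, g x := by
  have h := intervalIntegral.integral_comp_neg (a := -a) (b := 0) g
  simp only [hg, neg_zero, neg_neg] at h
  rw [← intervalIntegral.integral_add_adjacent_intervals (b := 0) (hc.intervalIntegrable _ _)
    (hc.intervalIntegrable _ _), h, two_smul]

end Parity

-- At `k = 0` both sides vanish, the right one through `x / 0 = 0`.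
lemma integral_cos_mul_mul_sin_mul (k a : ℝ) :
    ∫ x in 0..a, cos (k * x) * sin (k * x) = sin (k * a) ^ 2 / (2 * k) := by
  rcases eq_or_ne k 0 with rfl | hk
  · simp
  have h := intervalIntegral.smul_integral_comp_mul_left (fun t => sin t * cos t) k
    (a := 0) (b := a)
  simp only [integral_sin_mul_cos₁, mul_zero, sin_zero, smul_eq_mul] at h
  simp_rw [mul_comm (cos _)]
  field_simp
  linarith

open Real in
theorem stmt4_general (h f : ℝ) (hh : 0 < h)
    (n : ℕ) (hne : Even n) (k : ℝ) (hk : k = n * π / h) :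
    -- eigen-equations (for `sin(k|x|)` away from the kink at 0)
    (∀ x : ℝ, f * deriv (deriv (fun y => cos (k * y))) x
        = -(f * k^2) * cos (k * x))
    ∧ (∀ x : ℝ, f * deriv (deriv (fun y => sin (k * y))) x
        = -(f * k^2) * sin (k * x))
    ∧ (∀ x : ℝ, x ≠ 0 → f * deriv (deriv (fun y => sin (k * |y|))) x
        = -(f * k^2) * sin (k * |x|))
    -- value conditions u(±h) = u(0)
    ∧ (cos (k * h) = cos (k * 0) ∧ cos (k * (-h)) = cos (k * 0))
    ∧ (sin (k * h) = sin (k * 0) ∧ sin (k * (-h)) = sin (k * 0))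
    ∧ (sin (k * |h|) = sin (k * |(0:ℝ)|) ∧ sin (k * |(-h)|) = sin (k * |(0:ℝ)|))
    -- derivative (flux) conditions u'(h) − u'(0⁺) + u'(0⁻) − u'(−h) = 0
    ∧ (deriv (fun y => cos (k * y)) h
        - derivWithin (fun y => cos (k * y)) (Set.Ici 0) 0
        + derivWithin (fun y => cos (k * y)) (Set.Iic 0) 0
        - deriv (fun y => cos (k * y)) (-h) = 0)
    ∧ (deriv (fun y => sin (k * y)) h
        - derivWithin (fun y => sin (k * y)) (Set.Ici 0) 0
        + derivWithin (fun y => sin (k * y)) (Set.Iic 0) 0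
        - deriv (fun y => sin (k * y)) (-h) = 0)
    ∧ (deriv (fun y => sin (k * |y|)) h
        - derivWithin (fun y => sin (k * |y|)) (Set.Ici 0) 0
        + derivWithin (fun y => sin (k * |y|)) (Set.Iic 0) 0
        - deriv (fun y => sin (k * |y|)) (-h) = 0)
    -- pairwise orthogonality in L²(−h,h)
    ∧ (∫ x in (-h)..h, cos (k * x) * sin (k * x)) = 0
    ∧ (∫ x in (-h)..h, cos (k * x) * sin (k * |x|)) = 0
    ∧ (∫ x in (-h)..h, sin (k * x) * sin (k * |x|)) = 0 := by
  have hkh : k * h = n * π := by rw [hk]; field_simp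
  have hsin : sin (k * h) = 0 := by rw [hkh, sin_nat_mul_pi]
  have hcos : cos (k * h) = 1 := by rw [hkh, cos_nat_mul_pi, hne.neg_one_pow]
  have hcos_sin : ∫ x in 0..h, cos (k * x) * sin (k * |x|) = 0 := by
    rw [intervalIntegral.integral_congr (g := fun x => cos (k * x) * sin (k * x))
      fun x hx => by rw [abs_of_nonneg (uIcc_of_le hh.le ▸ hx).1],
      integral_cos_mul_mul_sin_mul, hsin]
    simp
  refine ⟨fun x => ?_, fun x => ?_, fun x hx => ?_, ?_, ?_, ?_, ?_, ?_, ?_, ?_, ?_, ?_⟩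
  · rw [deriv_deriv_cos_mul]; ring
  · rw [deriv_deriv_sin_mul]; ring
  · rw [deriv_deriv_sin_mul_abs k hx]; ring
  · simp [hcos]
  · simp [hsin]
  · simp [abs_of_pos hh, hsin]
  · exact (couplingFlux_cos_mul k h).trans (by simp [hsin])
  · exact couplingFlux_sin_mul k h
  · exact (couplingFlux_sin_mul_abs k hh).trans (by simp [hcos])
  · exact intervalIntegral.integral_symm_eq_zero_of_odd (fun x => by simp) h
  · rw [intervalIntegral.integral_symm_of_even (fun x => by simp) (by fun_prop), hcos_sin,
      smul_zero]
  · exact intervalIntegral.integral_symm_eq_zero_of_odd (fun x => by simp) h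

open Real in
/-- On the symmetric element `[−h,h]`, for even `n ≥ 2` and `k = nπ/h`, the
three modes `cos(kx)`, `sin(kx)` and `sin(k|x|)` satisfy the constant
coefficient eigenproblem `f u'' = −f k² u` with the insulating coupling
boundary conditions, and are pairwise orthogonal in `L²(−h,h)`. -/
theorem stmt4 (h f : ℝ) (hh : 0 < h) (hf : 0 < f)
    (n : ℕ) (hn : 2 ≤ n) (hne : Even n) (k : ℝ) (hk : k = n * π / h) :
    -- eigen-equations (for `sin(k|x|)` away from the kink at 0)
    (∀ x : ℝ, f * deriv (deriv (fun y => cos (k * y))) x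
        = -(f * k^2) * cos (k * x))
    ∧ (∀ x : ℝ, f * deriv (deriv (fun y => sin (k * y))) x
        = -(f * k^2) * sin (k * x))
    ∧ (∀ x : ℝ, x ≠ 0 → f * deriv (deriv (fun y => sin (k * |y|))) x
        = -(f * k^2) * sin (k * |x|))
    -- value conditions u(±h) = u(0)
    ∧ (cos (k * h) = cos (k * 0) ∧ cos (k * (-h)) = cos (k * 0))
    ∧ (sin (k * h) = sin (k * 0) ∧ sin (k * (-h)) = sin (k * 0))
    ∧ (sin (k * |h|) = sin (k * |(0:ℝ)|) ∧ sin (k * |(-h)|) = sin (k * |(0:ℝ)|))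
    -- derivative (flux) conditions u'(h) − u'(0⁺) + u'(0⁻) − u'(−h) = 0
    ∧ (deriv (fun y => cos (k * y)) h
        - derivWithin (fun y => cos (k * y)) (Set.Ici 0) 0
        + derivWithin (fun y => cos (k * y)) (Set.Iic 0) 0
        - deriv (fun y => cos (k * y)) (-h) = 0)
    ∧ (deriv (fun y => sin (k * y)) h
        - derivWithin (fun y => sin (k * y)) (Set.Ici 0) 0
        + derivWithin (fun y => sin (k * y)) (Set.Iic 0) 0
        - deriv (fun y => sin (k * y)) (-h) = 0)
    ∧ (deriv (fun y => sin (k * |y|)) h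
        - derivWithin (fun y => sin (k * |y|)) (Set.Ici 0) 0
        + derivWithin (fun y => sin (k * |y|)) (Set.Iic 0) 0
        - deriv (fun y => sin (k * |y|)) (-h) = 0)
    -- pairwise orthogonality in L²(−h,h)
    ∧ (∫ x in (-h)..h, cos (k * x) * sin (k * x)) = 0
    ∧ (∫ x in (-h)..h, cos (k * x) * sin (k * |x|)) = 0
    ∧ (∫ x in (-h)..h, sin (k * x) * sin (k * |x|)) = 0 :=
  stmt4_general h f hh n hne k hk
end

section
/- Let L₀ be the 8×8 symmetric matrix with rows: (−1,1,0,−1,1,0,0,0), (1,−2,1,0,0,0,0,0), (0,1,−2,1,0,0,0,0), (−1,0,1,−1,0,0,0,1), (1,0,0,0,−1,1,0,−1), (0,0,0,0,1,−2,1,0), (0,0,0,0,0,1,−2,1), (0,0,0,1,−1,0,1,−1), and let D = diag(0,1,1,0,0,1,1,0). Then the roots of det(L₀ − λD) = 0 are exactly {0, −2/3, −2, −4}, so zero is a root and all other roots are negative reals. -/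
/-!
`L₀ − λD` is invariant under exchanging the two elements (node `i` ↔ node `i + 4`), so it has
the block form `[[A, B], [B, A]]`. On symmetric and antisymmetric vectors it acts as `A + B`
and `A − B`, whence `det (L₀ − λD) = det (A + B) · det (A − B)`, a product of two quadratics
in `λ` with roots `0, −4` and `−2/3, −2`.
-/

/-- The degenerate mass matrix `D = diag(0,1,1,0,0,1,1,0)`. -/
def Dmat : Matrix (Fin 8) (Fin 8) ℂ :=
  Matrix.diagonal ![0, 1, 1, 0, 0, 1, 1, 0]

/-- The decoupled-element operator `L₀` (coupling parameter `γ = 0`) of the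
overlapping-element embedding of discrete diffusion. -/
def L0mat : Matrix (Fin 8) (Fin 8) ℂ :=
  !![-1,  1,  0, -1,  1,  0,  0,  0;
      1, -2,  1,  0,  0,  0,  0,  0;
      0,  1, -2,  1,  0,  0,  0,  0;
     -1,  0,  1, -1,  0,  0,  0,  1;
      1,  0,  0,  0, -1,  1,  0, -1;
      0,  0,  0,  0,  1, -2,  1,  0;
      0,  0,  0,  0,  0,  1, -2,  1;
      0,  0,  0,  1, -1,  0,  1, -1]

namespace Matrix

variable {n R : Type*} [Fintype n] [DecidableEq n] [CommRing R]

theorem det_fromBlocks_self_swap (A B : Matrix n n R) :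
    (fromBlocks A B B A).det = (A + B).det * (A - B).det := by
  have factor : fromBlocks A B B A =
      fromBlocks 1 0 1 1 * fromBlocks (A + B) B 0 (A - B) * fromBlocks 1 0 (-1) 1 := by
    simp only [fromBlocks_multiply, Matrix.one_mul, Matrix.mul_one, Matrix.zero_mul,
      Matrix.mul_zero, Matrix.mul_neg, add_zero, zero_add, fromBlocks_inj]
    refine ⟨?_, trivial, ?_, ?_⟩ <;> abel
  rw [factor, det_mul, det_mul, det_fromBlocks_zero₂₁, det_fromBlocks_zero₁₂,
    det_fromBlocks_zero₁₂]
  simp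

end Matrix

noncomputable def elementBlock (lam : ℂ) : Matrix (Fin 4) (Fin 4) ℂ :=
  !![-1, 1, 0, -1; 1, -2 - lam, 1, 0; 0, 1, -2 - lam, 1; -1, 0, 1, -1]

def crossBlock : Matrix (Fin 4) (Fin 4) ℂ :=
  !![1, 0, 0, 0; 0, 0, 0, 0; 0, 0, 0, 0; 0, 0, 0, 1]

theorem L0mat_sub_smul_Dmat_eq_reindex_fromBlocks (lam : ℂ) :
    L0mat - lam • Dmat = Matrix.reindex finSumFinEquiv finSumFinEquiv
      (Matrix.fromBlocks (elementBlock lam) crossBlock crossBlock (elementBlock lam)) := by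
  ext i j
  fin_cases i <;> fin_cases j <;> simp [L0mat, Dmat] <;> rfl

theorem det_elementBlock_add_crossBlock (lam : ℂ) :
    (elementBlock lam + crossBlock).det = -lam * (lam + 4) := by
  simp [elementBlock, crossBlock, Matrix.det_succ_row_zero, Fin.sum_univ_succ, Fin.succAbove]
  ring

theorem det_elementBlock_sub_crossBlock (lam : ℂ) :
    (elementBlock lam - crossBlock).det = 3 * (lam + 2 / 3) * (lam + 2) := by
  simp [elementBlock, crossBlock, Matrix.det_succ_row_zero, Fin.sum_univ_succ, Fin.succAbove]
  ring

theorem det_L0mat_sub_smul_Dmat (lam : ℂ) :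
    (L0mat - lam • Dmat).det = -3 * lam * (lam + 2 / 3) * (lam + 2) * (lam + 4) := by
  rw [L0mat_sub_smul_Dmat_eq_reindex_fromBlocks, Matrix.det_reindex_self,
    Matrix.det_fromBlocks_self_swap, det_elementBlock_add_crossBlock,
    det_elementBlock_sub_crossBlock]
  ring

/-- The roots of `det(L₀ − λD) = 0` are exactly `{0, −2/3, −2, −4}`: zero
is a root and all other roots are negative reals. -/
theorem stmt8 (lam : ℂ) :
    (L0mat - lam • Dmat).det = 0 ↔
      lam = 0 ∨ lam = -2/3 ∨ lam = -2 ∨ lam = -4 := by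
  rw [det_L0mat_sub_smul_Dmat]
  simp only [mul_eq_zero, add_eq_zero_iff_eq_neg, neg_div, or_assoc]
  norm_num
end

section
/- Fix parameters. Define the coupled operator L_γ = (1−γ)L₀ + γL₁ where L₀ and L₁ are the 8×8 operators of the overlapping-element embedding of discrete diffusion (L₁ contains shift operators 𝒮± coupling neighbouring elements, L₀ replaces those shifts by 1). On 2m-periodic fine-grid data, the operator L₁ reproduces discrete diffusion on the overlapping-element embedding: for the operator-valued eigenvector vⱼ = (1, s, s², s³, s², s³, s⁴, s⁵) with fine-grid shift s and coarse shift 𝒮± = s^{±2}, one has L₁ vⱼ = (s − 2 + s^{−1}) D vⱼ componentwise on the dynamic components (components 2,3,6,7), where D = diag(0,1,1,0,0,1,1,0), and the algebraic components (1,4,5,8) of L₁ vⱼ vanish. -/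
section
variable {α : Type*} (a b c d e f g h : α)
@[simp] lemma vec8_0 : ![a,b,c,d,e,f,g,h] (0 : Fin 8) = a := rfl
@[simp] lemma vec8_1 : ![a,b,c,d,e,f,g,h] (1 : Fin 8) = b := rfl
@[simp] lemma vec8_2 : ![a,b,c,d,e,f,g,h] (2 : Fin 8) = c := rfl
@[simp] lemma vec8_3 : ![a,b,c,d,e,f,g,h] (3 : Fin 8) = d := rfl
@[simp] lemma vec8_4 : ![a,b,c,d,e,f,g,h] (4 : Fin 8) = e := rfl
@[simp] lemma vec8_5 : ![a,b,c,d,e,f,g,h] (5 : Fin 8) = f := rfl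
@[simp] lemma vec8_6 : ![a,b,c,d,e,f,g,h] (6 : Fin 8) = g := rfl
@[simp] lemma vec8_7 : ![a,b,c,d,e,f,g,h] (7 : Fin 8) = h := rfl
end

/-- The fully coupled overlapping-element operator `L₁` reproduces discrete
diffusion: for the operator-valued eigenvector
`v = (1, s, s², s³, s², s³, s⁴, s⁵)` with fine-grid shift `s` (so the coarse
shifts are `𝒮± = s^{±2}`), one has `L₁ v = (s − 2 + s⁻¹) D v`, i.e. the
dynamic components carry eigenvalue `s − 2 + s⁻¹` and the algebraic
components of `L₁ v` vanish. -/
theorem stmt13 (R : Type*) [CommRing R] (s : Rˣ) :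
    let Sp : R := (s : R)^2
    let Sm : R := ((s⁻¹ : Rˣ) : R)^2
    let L1 : Matrix (Fin 8) (Fin 8) R :=
      !![-1,   1,  0, -Sm, Sm,  0,  0,   0;
          1,  -2,  1,   0,  0,  0,  0,   0;
          0,   1, -2,   1,  0,  0,  0,   0;
        -Sp,   0,  1,  -1,  0,  0,  0,  Sm;
         Sp,   0,  0,   0, -1,  1,  0, -Sm;
          0,   0,  0,   0,  1, -2,  1,   0;
          0,   0,  0,   0,  0,  1, -2,   1;
          0,   0,  0,  Sp, -Sp, 0,  1,  -1]
    let D : Matrix (Fin 8) (Fin 8) R :=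
      Matrix.diagonal ![0, 1, 1, 0, 0, 1, 1, 0]
    let v : Fin 8 → R :=
      ![1, (s : R), (s : R)^2, (s : R)^3, (s : R)^2, (s : R)^3,
        (s : R)^4, (s : R)^5]
    L1.mulVec v = ((s : R) - 2 + ((s⁻¹ : Rˣ) : R)) • D.mulVec v := by
  intro Sp Sm L1 D v
  set t : R := ((s⁻¹ : Rˣ) : R) with ht
  have hinv : t * (s : R) = 1 := by
    rw [ht, ← Units.val_mul, inv_mul_cancel, Units.val_one]
  funext i
  fin_cases i <;>
    simp only [L1, D, v, Sp, Sm, Matrix.mulVec, dotProduct,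
      Fin.sum_univ_eight, Matrix.of_apply, Fin.reduceFinMk,
      Matrix.mulVec_diagonal, Matrix.diagonal_apply, Fin.reduceEq, reduceIte,
      Pi.smul_apply, smul_eq_mul, Fin.isValue,
      vec8_0, vec8_1, vec8_2, vec8_3, vec8_4, vec8_5, vec8_6, vec8_7] <;>
  [ linear_combination (1 - (s:R) + (s:R)*t - (s:R)^2*t) * hinv;
    linear_combination (-1 : R) * hinv;
    linear_combination (-(s:R)) * hinv;
    linear_combination ((s:R)^3 + (s:R)^4*t) * hinv;
    linear_combination (-(s:R)^3 - (s:R)^4*t) * hinv;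
    linear_combination (-(s:R)^2) * hinv;
    linear_combination (-(s:R)^3) * hinv;
    ring ]
end
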